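/- Let k ≥ 11, let R be the rainbow k-clique, let a = k!/(k^k − k), let γ > 0, and let n ≥ k be an integer satisfying a·(n^{k−1}/(k−1)! − binom(n−1,k−1)) < γ·binom(n−1,k−1) − binom(n−2,k−2). If H is an n-vertex T-edge-colored complete graph with I(R,H) = I(R,n) and I(R,H) ≥ (a+γ)·binom(n,k), then every vertex x ∈ V(H) satisfies d(x) ≥ a·n^{k−1}/(k−1)!, where d(x) is the number of k-subsets of V(H) containing x whose induced coloring is isomorphic to R. -/

import Mathlib

open Finset Filter

open scoped Classical

section Defs

variable {T : Type}

/-- A coloring of the complete graph is symmetric. -/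
def IsSym {V : Type} (χ : V → V → T) : Prop := ∀ u v, χ u v = χ v u

/-- `copyCount k n R χ` : the number of `k`-element subsets of `Fin n` whose coloring
induced by `χ` is isomorphic (as an edge-colored complete graph) to `R`. -/
noncomputable def copyCount (k n : ℕ) (R : Fin k → Fin k → T) (χ : Fin n → Fin n → T) : ℕ :=
  ((Finset.powersetCard k (Finset.univ : Finset (Fin n))).filter
    (fun S => ∃ φ : Fin k → Fin n, Function.Injective φ ∧ (∀ a, φ a ∈ S) ∧
      ∀ a b : Fin k, a ≠ b → χ (φ a) (φ b) = R a b)).card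

/-- `maxCopyCount k n R = I(R,n)` : the maximum of `copyCount` over all symmetric
`T`-colorings of the complete graph on `n` vertices. -/
noncomputable def maxCopyCount [Fintype T] (k n : ℕ) (R : Fin k → Fin k → T) : ℕ :=
  Finset.sup ((Finset.univ : Finset (Fin n → Fin n → T)).filter (fun χ => IsSym χ))
    (fun χ => copyCount k n R χ)

/-- `vertDeg k n R χ x = d(x)` : the number of `k`-subsets containing `x` whose induced
coloring is isomorphic to `R`. -/
noncomputable def vertDeg (k n : ℕ) (R : Fin k → Fin k → T) (χ : Fin n → Fin n → T)
    (x : Fin n) : ℕ :=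
  ((Finset.powersetCard k (Finset.univ : Finset (Fin n))).filter
    (fun S => x ∈ S ∧ ∃ φ : Fin k → Fin n, Function.Injective φ ∧ (∀ a, φ a ∈ S) ∧
      ∀ a b : Fin k, a ≠ b → χ (φ a) (φ b) = R a b)).card

/-- `embCount k n R χ i x = d_i(x)` : the number of injective color-preserving maps
`φ : Fin k → Fin n` with `φ i = x`. -/
noncomputable def embCount (k n : ℕ) (R : Fin k → Fin k → T) (χ : Fin n → Fin n → T)
    (i : Fin k) (x : Fin n) : ℕ :=
  ((Finset.univ : Finset (Fin k → Fin n)).filter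
    (fun φ => Function.Injective φ ∧ φ i = x ∧
      ∀ a b : Fin k, a ≠ b → χ (φ a) (φ b) = R a b)).card

/-- `Nset k n R χ i x = N_i(x)` : the set of vertices `y ≠ x` lying in the image of some
injective color-preserving map `φ : Fin k → Fin n` with `φ i = x`. -/
noncomputable def Nset (k n : ℕ) (R : Fin k → Fin k → T) (χ : Fin n → Fin n → T)
    (i : Fin k) (x : Fin n) : Finset (Fin n) :=
  (Finset.univ : Finset (Fin n)).filter
    (fun y => y ≠ x ∧ ∃ φ : Fin k → Fin n, Function.Injective φ ∧ φ i = x ∧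
      (∀ a b : Fin k, a ≠ b → χ (φ a) (φ b) = R a b) ∧ ∃ a, φ a = y)

/-- `colorDeg χ x c = d_c(x)` : the number of vertices `y ≠ x` with `χ x y = c`. -/
noncomputable def colorDeg {n : ℕ} (χ : Fin n → Fin n → T) (x : Fin n) (c : T) : ℕ :=
  ((Finset.univ : Finset (Fin n)).filter (fun y => y ≠ x ∧ χ x y = c)).card

end Defs

/-- The rainbow `k`-clique: the edge `ij` gets color `{i,j}`. -/
def rainbowClique (k : ℕ) : Fin k → Fin k → Finset (Fin k) := fun i j => {i, j}

/-- A rainbow graph `G` on `[k]`, viewed as an edge-colored complete graph: edges `ij ∈ E`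
get color `{i,j}`, non-edges get color `∅`. -/
noncomputable def rainbowOf {k : ℕ} (G : SimpleGraph (Fin k)) :
    Fin k → Fin k → Finset (Fin k) :=
  fun i j => if G.Adj i j then {i, j} else ∅

/-- `B(x)` : the set of neighbors of `x`, i.e. vertices joined to `x` by a non-`∅` color. -/
noncomputable def Bset {k n : ℕ} (χ : Fin n → Fin n → Finset (Fin k)) (x : Fin n) :
    Finset (Fin n) :=
  (Finset.univ : Finset (Fin n)).filter (fun y => y ≠ x ∧ χ x y ≠ ∅)

/-- The degree of vertex `i` in the graph `G`. -/
noncomputable def degR {k : ℕ} (G : SimpleGraph (Fin k)) (i : Fin k) : ℕ :=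
  ((Finset.univ : Finset (Fin k)).filter (fun j => G.Adj i j)).card

/-!
Suppose some vertex `x` has `d(x) < a·n^{k-1}/(k-1)!`, and let `y` be a vertex of maximum degree.
Replacing `x` by a clone of `y` keeps every copy avoiding `x`, and moving each copy through `y`
but not `x` onto the clone gives a new copy through `x`. Hence the new colouring has at least
`I - d(x) + d(y) - binom(n-2,k-2)` copies, the last term bounding the copies through both `x`
and `y`, so maximality forces `d(y) ≤ d(x) + binom(n-2,k-2)`. Averaging gives
`d(y) ≥ (a+γ)·binom(n-1,k-1)`, and the assumed inequality on `n` makes the two bounds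
incompatible.
-/

theorem card_filter_powersetCard_mem_mem_le {α : Type*} [Fintype α] [DecidableEq α] {x y : α}
    (hxy : x ≠ y) (k : ℕ) :
    #{S ∈ powersetCard k (univ : Finset α) | x ∈ S ∧ y ∈ S} ≤
      (Fintype.card α - 2).choose (k - 2) := by
  calc #{S ∈ powersetCard k (univ : Finset α) | x ∈ S ∧ y ∈ S}
      ≤ #(powersetCard (k - 2) (univ \ {x, y})) := by
        refine card_le_card_of_injOn (· \ {x, y}) ?_ ?_
        · intro S hS
          rw [mem_coe, mem_filter, mem_powersetCard_univ] at hS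
          have hxyS : {x, y} ⊆ S := insert_subset hS.2.1 (singleton_subset_iff.2 hS.2.2)
          rw [mem_coe, mem_powersetCard]
          refine ⟨sdiff_subset_sdiff (subset_univ S) subset_rfl, ?_⟩
          rw [card_sdiff_of_subset hxyS, card_pair hxy, hS.1]
        · intro S hS S' hS' h
          rw [mem_coe, mem_filter] at hS hS'
          rw [← sdiff_union_of_subset (insert_subset hS.2.1 (singleton_subset_iff.2 hS.2.2)),
            ← sdiff_union_of_subset (insert_subset hS'.2.1 (singleton_subset_iff.2 hS'.2.2))]
          exact congrArg (· ∪ {x, y}) h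
    _ = (Fintype.card α - 2).choose (k - 2) := by
        rw [card_powersetCard, card_sdiff_of_subset (subset_univ _), card_pair hxy, card_univ]

/-- `x` becomes a clone of `y`; the edge `xy` itself gets the junk colour `χ y y`. -/
def cloneVertex {T V : Type*} [DecidableEq V] (χ : V → V → T) (x y : V) : V → V → T :=
  Function.onFun χ (Function.update id x y)

theorem IsSym.cloneVertex {T V : Type} [DecidableEq V] {χ : V → V → T} (hχ : IsSym χ)
    (x y : V) : IsSym (cloneVertex χ x y) :=
  fun _ _ => hχ _ _

section Copies

variable {T : Type} {k n : ℕ}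

noncomputable def copies (R : Fin k → Fin k → T) (χ : Fin n → Fin n → T) :
    Finset (Finset (Fin n)) :=
  {S ∈ powersetCard k univ | ∃ φ : Fin k → Fin n, Function.Injective φ ∧ (∀ a, φ a ∈ S) ∧
      ∀ a b : Fin k, a ≠ b → χ (φ a) (φ b) = R a b}

variable (R : Fin k → Fin k → T) (χ : Fin n → Fin n → T)

theorem copyCount_eq_card_copies : copyCount k n R χ = #(copies R χ) := rfl

theorem vertDeg_eq_card_filter_copies (x : Fin n) :
    vertDeg k n R χ x = #{S ∈ copies R χ | x ∈ S} := by
  unfold vertDeg copies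
  rw [filter_filter]
  simp only [and_comm]

theorem sum_vertDeg : ∑ x, vertDeg k n R χ x = k * copyCount k n R χ := by
  have hcard : ∀ S ∈ copies R χ, #S = k := fun S hS =>
    mem_powersetCard_univ.1 (mem_filter.1 hS).1
  simp only [vertDeg_eq_card_filter_copies, card_filter]
  rw [sum_comm, copyCount_eq_card_copies, card_eq_sum_ones, mul_sum, mul_one]
  refine sum_congr rfl fun S hS => ?_
  rw [← card_filter, filter_mem_eq_inter, univ_inter, hcard S hS]

theorem exists_le_vertDeg_of_le_copyCount (hk : 0 < k) (hn : 0 < n) (c : ℝ)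
    (h : c * n.choose k ≤ copyCount k n R χ) :
    ∃ y, c * (n - 1).choose (k - 1) ≤ vertDeg k n R χ y := by
  have : Nonempty (Fin n) := ⟨⟨0, hn⟩⟩
  obtain ⟨y, -, hy⟩ := exists_le_of_sum_le (f := fun _ => k * copyCount k n R χ)
    (g := fun y => n * vertDeg k n R χ y) univ_nonempty
    (by rw [sum_const, card_univ, Fintype.card_fin, smul_eq_mul, ← mul_sum, sum_vertDeg])
  have hchoose : (n : ℝ) * (n - 1).choose (k - 1) = k * n.choose k := by
    obtain ⟨n, rfl⟩ := Nat.exists_eq_add_one_of_ne_zero hn.ne'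
    obtain ⟨k, rfl⟩ := Nat.exists_eq_add_one_of_ne_zero hk.ne'
    rw [Nat.add_sub_cancel, Nat.add_sub_cancel, mul_comm (k + 1 : ℕ).cast]
    exact_mod_cast Nat.add_one_mul_choose_eq n k
  refine ⟨y, le_of_mul_le_mul_left ?_ (Nat.cast_pos.2 hn)⟩
  calc (n : ℝ) * (c * (n - 1).choose (k - 1)) = k * (c * n.choose k) := by
        rw [mul_left_comm, hchoose, mul_left_comm]
    _ ≤ k * copyCount k n R χ := by gcongr
    _ ≤ n * vertDeg k n R χ y := by exact_mod_cast hy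

theorem map_mem_copies {m : ℕ} {χ' : Fin m → Fin m → T} {S : Finset (Fin n)}
    (hS : S ∈ copies R χ) (f : Fin n ↪ Fin m)
    (hf : ∀ u ∈ S, ∀ v ∈ S, u ≠ v → χ' (f u) (f v) = χ u v) :
    S.map f ∈ copies R χ' := by
  obtain ⟨hSk, φ, hφ, hφS, hφχ⟩ := mem_filter.1 hS
  refine mem_filter.2 ⟨?_, f ∘ φ, f.injective.comp hφ, fun a => mem_map_of_mem f (hφS a),
    fun a b hab => ?_⟩
  · simpa only [mem_powersetCard_univ, card_map] using hSk
  · rw [Function.comp_apply, Function.comp_apply,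
      hf _ (hφS a) _ (hφS b) (hφ.ne hab), hφχ a b hab]

theorem card_add_card_le_copyCount_cloneVertex (x y : Fin n) :
    #{S ∈ copies R χ | x ∉ S} + #{S ∈ copies R χ | x ∉ S ∧ y ∈ S} ≤
      copyCount k n R (cloneVertex χ x y) := by
  have hfix : ∀ u ≠ x, Function.update id x y u = u := fun u hu => Function.update_of_ne hu _ _
  have hswap : ∀ u ≠ x, Function.update id x y (Equiv.swap x y u) = u := by
    intro u hu
    by_cases huy : u = y
    · rw [huy, Equiv.swap_apply_right, Function.update_self]
    · rw [Equiv.swap_apply_of_ne_of_ne hu huy, hfix u hu]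
  have hkeep : #{S ∈ copies R χ | x ∉ S} ≤ #{S ∈ copies R (cloneVertex χ x y) | x ∉ S} := by
    refine card_le_card fun S hS => ?_
    obtain ⟨hS, hxS⟩ := mem_filter.1 hS
    have := map_mem_copies R χ (χ' := cloneVertex χ x y) hS (Function.Embedding.refl _)
      fun u hu v hv _ => by
        show χ (Function.update id x y u) (Function.update id x y v) = χ u v
        rw [hfix u (ne_of_mem_of_not_mem hu hxS), hfix v (ne_of_mem_of_not_mem hv hxS)]
    rw [map_refl] at this
    exact mem_filter.2 ⟨this, hxS⟩
  have hmove : #{S ∈ copies R χ | x ∉ S ∧ y ∈ S} ≤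
      #{S ∈ copies R (cloneVertex χ x y) | x ∈ S} := by
    refine card_le_card_of_injOn (map (Equiv.swap x y).toEmbedding) (fun S hS => ?_)
      (Finset.map_injective _).injOn
    rw [mem_coe, mem_filter] at hS ⊢
    obtain ⟨hS, hxS, hyS⟩ := hS
    refine ⟨map_mem_copies R χ hS _ fun u hu v hv _ => ?_, ?_⟩
    · show χ (Function.update id x y (Equiv.swap x y u))
        (Function.update id x y (Equiv.swap x y v)) = χ u v
      rw [hswap u (ne_of_mem_of_not_mem hu hxS), hswap v (ne_of_mem_of_not_mem hv hxS)]
    · exact mem_map_equiv.2 (by rwa [Equiv.symm_swap, Equiv.swap_apply_left])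
  have hsplit := card_filter_add_card_filter_not (s := copies R (cloneVertex χ x y)) (x ∈ ·)
  rw [copyCount_eq_card_copies]
  omega

theorem copyCount_le_maxCopyCount [Fintype T] {χ : Fin n → Fin n → T} (hχ : IsSym χ) :
    copyCount k n R χ ≤ maxCopyCount k n R :=
  le_sup (mem_filter.2 ⟨mem_univ _, hχ⟩)

theorem vertDeg_le_vertDeg_add_choose_of_maximal [Fintype T] {χ : Fin n → Fin n → T}
    (hχ : IsSym χ) (hmax : copyCount k n R χ = maxCopyCount k n R) (x y : Fin n) :
    vertDeg k n R χ y ≤ vertDeg k n R χ x + (n - 2).choose (k - 2) := by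
  rcases eq_or_ne x y with rfl | hxy
  · exact Nat.le_add_right _ _
  have hclone := card_add_card_le_copyCount_cloneVertex R χ x y
  have hmaximal := copyCount_le_maxCopyCount R (hχ.cloneVertex x y)
  have hsplit_x : copyCount k n R χ = #{S ∈ copies R χ | x ∉ S} + vertDeg k n R χ x := by
    rw [copyCount_eq_card_copies, vertDeg_eq_card_filter_copies, add_comm,
      card_filter_add_card_filter_not]
  have hsplit_y : vertDeg k n R χ y =
      #{S ∈ copies R χ | x ∉ S ∧ y ∈ S} + #{S ∈ copies R χ | x ∈ S ∧ y ∈ S} := by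
    rw [vertDeg_eq_card_filter_copies, ← card_filter_add_card_filter_not (x ∈ ·), add_comm]
    simp only [filter_filter, and_comm]
  have hboth : #{S ∈ copies R χ | x ∈ S ∧ y ∈ S} ≤ (n - 2).choose (k - 2) := by
    simpa only [copies, filter_filter, Fintype.card_fin] using
      (card_le_card (filter_subset_filter _ (filter_subset _ _))).trans
        (card_filter_powersetCard_mem_mem_le hxy k)
  omega

end Copies

theorem min_degree_in_maximizer_general (k n : ℕ) (hk : 11 ≤ k) (γ : ℝ)
    (hineq : ((k.factorial : ℝ) / ((k : ℝ) ^ k - k)) *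
        ((n : ℝ) ^ (k - 1) / ((k - 1).factorial : ℝ) - ((n - 1).choose (k - 1) : ℝ)) <
      γ * ((n - 1).choose (k - 1) : ℝ) - ((n - 2).choose (k - 2) : ℝ))
    (χ : Fin n → Fin n → Finset (Fin k)) (hχ : IsSym χ)
    (hmax : copyCount k n (rainbowClique k) χ = maxCopyCount k n (rainbowClique k))
    (hbig : (((k.factorial : ℝ) / ((k : ℝ) ^ k - k)) + γ) * (n.choose k : ℝ) ≤
      (copyCount k n (rainbowClique k) χ : ℝ)) :
    ∀ x : Fin n,
      ((k.factorial : ℝ) / ((k : ℝ) ^ k - k)) * (n : ℝ) ^ (k - 1) / ((k - 1).factorial : ℝ) ≤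
        (vertDeg k n (rainbowClique k) χ x : ℝ) := by
  intro x
  by_contra! hx
  obtain ⟨y, hy⟩ := exists_le_vertDeg_of_le_copyCount _ χ (by omega) x.pos _ hbig
  have hdeg : (vertDeg k n (rainbowClique k) χ y : ℝ) ≤
      vertDeg k n (rainbowClique k) χ x + (n - 2).choose (k - 2) := by
    exact_mod_cast vertDeg_le_vertDeg_add_choose_of_maximal _ hχ hmax x y
  rw [mul_div_assoc] at hx
  linarith

/-- minimum degree in a maximizer for the rainbow `k`-clique, `k ≥ 11`:
every vertex lies in at least `a·n^{k−1}/(k−1)!` copies of `R`. -/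
theorem min_degree_in_maximizer (k n : ℕ) (hk : 11 ≤ k) (hn : k ≤ n) (γ : ℝ) (hγ : 0 < γ)
    (hineq : ((k.factorial : ℝ) / ((k : ℝ) ^ k - k)) *
        ((n : ℝ) ^ (k - 1) / ((k - 1).factorial : ℝ) - ((n - 1).choose (k - 1) : ℝ)) <
      γ * ((n - 1).choose (k - 1) : ℝ) - ((n - 2).choose (k - 2) : ℝ))
    (χ : Fin n → Fin n → Finset (Fin k)) (hχ : IsSym χ)
    (hmax : copyCount k n (rainbowClique k) χ = maxCopyCount k n (rainbowClique k))
    (hbig : (((k.factorial : ℝ) / ((k : ℝ) ^ k - k)) + γ) * (n.choose k : ℝ) ≤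
      (copyCount k n (rainbowClique k) χ : ℝ)) :
    ∀ x : Fin n,
      ((k.factorial : ℝ) / ((k : ℝ) ^ k - k)) * (n : ℝ) ^ (k - 1) / ((k - 1).factorial : ℝ) ≤
        (vertDeg k n (rainbowClique k) χ x : ℝ) :=
  min_degree_in_maximizer_general k n hk γ hineq χ hχ hmax hbig
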